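/- (Integrated smoothing estimate for the fractional Boussinesq–Coriolis–Stratification semigroup.) Let I = (0,∞), 0 ≤ μ < 3, 1 ≤ q < ∞, 1 ≤ r ≤ ∞, s ∈ ℝ, 1/2 ≤ α < 5/2, ν > 0, Ω ≠ 0 and N > 0. Then there is a constant C > 0, independent of Ω and N, such that for every ℂ⁴-valued v₀ ∈ FN^s_{q,μ,r}(ℝ³), ‖S^α_{Ω,N}(·)v₀‖_{𝓛^1(I;FN^{s+2α}_{q,μ,r})} ≤ (C L/ν) ‖v₀‖_{FN^s_{q,μ,r}}, where L = max{2, |Ω|/N, N/|Ω|}. -/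

import Mathlib

/-! The symbol is `e^{-νt|ξ|^{2α}}` times a bounded combination of `M₁, M₂, M₃`: in the weighted
coordinates `(Nξ₁, Nξ₂, Ωξ₃)` the entries of `M₁, M₃` are quotients of quadratic monomials by
`|ξ|'²`, up to the factors `N/Ω` and `Ω/N`, so they are bounded by `L`, while the entries of `M₂`
are bounded by `1` by Cauchy–Schwarz. On the support of `φ_j` one has `|ξ| ≥ (3/4)2^j`, so each
dyadic block of `S(t)v₀` decays like `e^{-ν((3/4)2^j)^{2α}t}` times the block of `v₀`; integrating
in time gains exactly the factor `2^{-2αj}` that the `𝓛¹(FN^{s+2α})` weight asks for. -/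

open MeasureTheory ENNReal

noncomputable section

abbrev En (n : ℕ) := EuclideanSpace ℝ (Fin n)

/-- The homogeneous Morrey norm `‖f‖_{q,μ} = sup_{x₀, d>0} d^{-μ/q} ‖f‖_{L^q(B_d(x₀))}`. -/
noncomputable def morreyNorm {n : ℕ} {F : Type*} [NormedAddCommGroup F]
    (q μ : ℝ) (f : En n → F) : ℝ≥0∞ :=
  ⨆ (x₀ : En n) (d : ℝ) (_ : 0 < d),
    ENNReal.ofReal (d ^ (-(μ / q))) *
      eLpNorm f (ENNReal.ofReal q) (volume.restrict (Metric.ball x₀ d))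

/-- ℓʳ norm over ℤ of a family of extended reals. -/
noncomputable def lrNorm (r : ℝ≥0∞) (a : ℤ → ℝ≥0∞) : ℝ≥0∞ :=
  if r = ⊤ then ⨆ j, a j else (∑' j, a j ^ r.toReal) ^ (1 / r.toReal)

/-- A Littlewood–Paley function: smooth, `0 ≤ φ ≤ 1`, supported in the annulus
`{3/4 ≤ |ξ| ≤ 8/3}`, with `∑_{j∈ℤ} φ(2^{-j}ξ) = 1` for `ξ ≠ 0`. -/
def IsLP {n : ℕ} (φ : En n → ℝ) : Prop :=
  ContDiff ℝ (⊤ : ℕ∞) φ ∧ (∀ ξ, 0 ≤ φ ξ) ∧ (∀ ξ, φ ξ ≤ 1) ∧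
    (∀ ξ, φ ξ ≠ 0 → 3 / 4 ≤ ‖ξ‖ ∧ ‖ξ‖ ≤ 8 / 3) ∧
    ∀ ξ : En n, ξ ≠ 0 → HasSum (fun j : ℤ => φ ((2 : ℝ) ^ (-j) • ξ)) 1

/-- Fourier–Besov–Morrey norm `‖f‖_{FN^s_{q,μ,r}}`, in terms of the Fourier transform. -/
noncomputable def fbmNorm {n : ℕ} {F : Type*} [NormedAddCommGroup F] [NormedSpace ℝ F]
    (s q μ : ℝ) (r : ℝ≥0∞) (φ : En n → ℝ) (fhat : En n → F) : ℝ≥0∞ :=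
  lrNorm r fun j : ℤ =>
    ENNReal.ofReal ((2 : ℝ) ^ ((j : ℝ) * s)) *
      morreyNorm q μ (fun ξ => φ ((2 : ℝ) ^ (-j) • ξ) • fhat ξ)

/-- Chemin–Lerner norm `𝓛¹((0,∞); FN^s_{q,μ,r})`, in terms of the Fourier transform. -/
noncomputable def clNorm1 {n : ℕ} {F : Type*} [NormedAddCommGroup F] [NormedSpace ℝ F]
    (s q μ : ℝ) (r : ℝ≥0∞) (φ : En n → ℝ) (fhat : ℝ → En n → F) : ℝ≥0∞ :=
  lrNorm r fun j : ℤ =>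
    ENNReal.ofReal ((2 : ℝ) ^ ((j : ℝ) * s)) *
      ∫⁻ t in Set.Ioi (0 : ℝ), morreyNorm q μ (fun ξ => φ ((2 : ℝ) ^ (-j) • ξ) • fhat t ξ)

/-- Chemin–Lerner norm `𝓛^∞((0,∞); FN^s_{q,μ,r})`, in terms of the Fourier transform. -/
noncomputable def clNormInf {n : ℕ} {F : Type*} [NormedAddCommGroup F] [NormedSpace ℝ F]
    (s q μ : ℝ) (r : ℝ≥0∞) (φ : En n → ℝ) (fhat : ℝ → En n → F) : ℝ≥0∞ :=
  lrNorm r fun j : ℤ =>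
    ENNReal.ofReal ((2 : ℝ) ^ ((j : ℝ) * s)) *
      essSup (fun t => morreyNorm q μ (fun ξ => φ ((2 : ℝ) ^ (-j) • ξ) • fhat t ξ))
        (volume.restrict (Set.Ioi (0 : ℝ)))

/-- Norm of `X_r = 𝓛^∞(I;FN^s_{q,μ,r}) ∩ 𝓛^1(I;FN^{s+2α}_{q,μ,r})`. -/
noncomputable def xrNorm {n : ℕ} {F : Type*} [NormedAddCommGroup F] [NormedSpace ℝ F]
    (s α q μ : ℝ) (r : ℝ≥0∞) (φ : En n → ℝ) (fhat : ℝ → En n → F) : ℝ≥0∞ :=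
  clNormInf s q μ r φ fhat + clNorm1 (s + 2 * α) q μ r φ fhat

/-- `|ξ|' = √(N²ξ₁² + N²ξ₂² + Ω²ξ₃²)`. -/
noncomputable def nxp (Ω N : ℝ) (ξ : En 3) : ℝ :=
  Real.sqrt (N ^ 2 * (ξ 0) ^ 2 + N ^ 2 * (ξ 1) ^ 2 + Ω ^ 2 * (ξ 2) ^ 2)

noncomputable def M1 (Ω N : ℝ) (ξ : En 3) : Matrix (Fin 4) (Fin 4) ℝ :=
  ((nxp Ω N ξ) ^ 2)⁻¹ •
    !![Ω ^ 2 * (ξ 2) ^ 2, 0, -(N ^ 2 * ξ 0 * ξ 2), Ω * N * ξ 1 * ξ 2;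
       0, Ω ^ 2 * (ξ 2) ^ 2, -(N ^ 2 * ξ 1 * ξ 2), -(Ω * N * ξ 0 * ξ 2);
       -(Ω ^ 2 * ξ 0 * ξ 2), -(Ω ^ 2 * ξ 1 * ξ 2), N ^ 2 * ((ξ 0) ^ 2 + (ξ 1) ^ 2), 0;
       Ω * N * ξ 1 * ξ 2, -(Ω * N * ξ 0 * ξ 2), 0, N ^ 2 * ((ξ 0) ^ 2 + (ξ 1) ^ 2)]

noncomputable def M2 (Ω N : ℝ) (ξ : En 3) : Matrix (Fin 4) (Fin 4) ℝ :=
  (‖ξ‖ * nxp Ω N ξ)⁻¹ •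
    !![0, -(Ω * (ξ 2) ^ 2), Ω * ξ 1 * ξ 2, N * ξ 0 * ξ 2;
       Ω * (ξ 2) ^ 2, 0, -(Ω * ξ 0 * ξ 2), N * ξ 1 * ξ 2;
       -(Ω * ξ 1 * ξ 2), Ω * ξ 0 * ξ 2, 0, -(N * ((ξ 0) ^ 2 + (ξ 1) ^ 2));
       -(N * ξ 0 * ξ 2), -(N * ξ 1 * ξ 2), N * ((ξ 0) ^ 2 + (ξ 1) ^ 2), 0]

noncomputable def M3 (Ω N : ℝ) (ξ : En 3) : Matrix (Fin 4) (Fin 4) ℝ :=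
  ((nxp Ω N ξ) ^ 2)⁻¹ •
    !![N ^ 2 * (ξ 1) ^ 2, -(N ^ 2 * ξ 0 * ξ 1), 0, -(Ω * N * ξ 1 * ξ 2);
       -(N ^ 2 * ξ 0 * ξ 1), N ^ 2 * (ξ 0) ^ 2, 0, Ω * N * ξ 0 * ξ 2;
       0, 0, 0, 0;
       -(Ω * N * ξ 1 * ξ 2), Ω * N * ξ 0 * ξ 2, 0, Ω ^ 2 * (ξ 2) ^ 2]

/-- Fourier symbol of the fractional Boussinesq–Coriolis–Stratification semigroup
`S^α_{Ω,N}(t)`. -/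
noncomputable def symS (ν α Ω N t : ℝ) (ξ : En 3) : Matrix (Fin 4) (Fin 4) ℝ :=
  Real.exp (-(ν * t * ‖ξ‖ ^ (2 * α))) •
    (Real.cos (t * nxp Ω N ξ / ‖ξ‖) • M1 Ω N ξ +
      Real.sin (t * nxp Ω N ξ / ‖ξ‖) • M2 Ω N ξ + M3 Ω N ξ)

/-- Action of `S^α_{Ω,N}(t)` on the Fourier side: `(S(t)v₀)^ = [S(t)]^ v̂₀`. -/
noncomputable def applyS (ν α Ω N t : ℝ) (v0 : En 3 → Fin 4 → ℂ) : En 3 → Fin 4 → ℂ :=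
  fun ξ => ((symS ν α Ω N t ξ).map (fun x : ℝ => (x : ℂ))).mulVec (v0 ξ)

lemma abs_inv_mul_le_of_abs_le_mul {n m L : ℝ} (hn : 0 ≤ n) (hL : 0 ≤ L) (h : |m| ≤ L * n) :
    |n⁻¹ * m| ≤ L := by
  rcases hn.eq_or_lt with rfl | hn
  · simpa using hL
  · rwa [abs_mul, abs_inv, abs_of_pos hn, inv_mul_le_iff₀ hn, mul_comm]

lemma nxp_sq (Ω N : ℝ) (ξ : En 3) :
    nxp Ω N ξ ^ 2 = N ^ 2 * ξ 0 ^ 2 + N ^ 2 * ξ 1 ^ 2 + Ω ^ 2 * ξ 2 ^ 2 :=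
  Real.sq_sqrt (by positivity)

lemma norm_sq_En3 (ξ : En 3) : ‖ξ‖ ^ 2 = ξ 0 ^ 2 + ξ 1 ^ 2 + ξ 2 ^ 2 := by
  simp [EuclideanSpace.norm_sq_eq, Fin.sum_univ_three]

set_option maxHeartbeats 400000 in
lemma abs_M1_M3_apply_le {Ω N L : ℝ} (hL : 1 ≤ L) (hNΩ : N ≤ L * |Ω|) (hΩN : |Ω| ≤ L * N) (ξ : En 3)
    (i k : Fin 4) : |M1 Ω N ξ i k| ≤ L ∧ |M3 Ω N ξ i k| ≤ L := by
  have hN : 0 ≤ N := by nlinarith [abs_nonneg Ω]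
  have hNΩ2 : N ^ 2 ≤ L ^ 2 * Ω ^ 2 := by nlinarith [sq_abs Ω, abs_nonneg Ω]
  have hΩN2 : Ω ^ 2 ≤ L ^ 2 * N ^ 2 := by nlinarith [sq_abs Ω, abs_nonneg Ω]
  have hL2 : 1 ≤ L ^ 2 := by nlinarith
  simp only [M1, M3, Matrix.smul_apply, smul_eq_mul]
  rw [nxp_sq]
  generalize ξ 0 = x; generalize ξ 1 = y; generalize ξ 2 = z
  set n := N ^ 2 * x ^ 2 + N ^ 2 * y ^ 2 + Ω ^ 2 * z ^ 2
  have hn : 0 ≤ n := by positivity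
  have hx : N ^ 2 * x ^ 2 ≤ n := by simp only [n]; nlinarith [sq_nonneg (N * y), sq_nonneg (Ω * z)]
  have hy : N ^ 2 * y ^ 2 ≤ n := by simp only [n]; nlinarith [sq_nonneg (N * x), sq_nonneg (Ω * z)]
  have hz : Ω ^ 2 * z ^ 2 ≤ n := by simp only [n]; nlinarith [sq_nonneg (N * x), sq_nonneg (N * y)]
  have hxy : N ^ 2 * x ^ 2 + N ^ 2 * y ^ 2 ≤ n := by simp only [n]; nlinarith [sq_nonneg (Ω * z)]
  have hxΩ : Ω ^ 2 * x ^ 2 ≤ L ^ 2 * (N ^ 2 * x ^ 2) := by nlinarith [sq_nonneg x]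
  have hyΩ : Ω ^ 2 * y ^ 2 ≤ L ^ 2 * (N ^ 2 * y ^ 2) := by nlinarith [sq_nonneg y]
  have hzN : N ^ 2 * z ^ 2 ≤ L ^ 2 * (Ω ^ 2 * z ^ 2) := by nlinarith [sq_nonneg z]
  have hLn : 0 ≤ L ^ 2 * n := by positivity
  -- every squared entry is a product of two of the quantities bounded above
  constructor <;> refine abs_inv_mul_le_of_abs_le_mul hn (by linarith)
    (abs_le_of_sq_le_sq ?_ (by positivity)) <;>
  · fin_cases i <;> fin_cases k <;> simp <;>
      linarith [mul_le_mul hx hx (by positivity) hn, mul_le_mul hy hy (by positivity) hn,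
        mul_le_mul hz hz (by positivity) hn, mul_le_mul hx hy (by positivity) hn,
        mul_le_mul hx hz (by positivity) hn, mul_le_mul hy hz (by positivity) hn,
        mul_le_mul hxy hxy (by positivity) hn,
        mul_le_mul hx hzN (by positivity) hn, mul_le_mul hy hzN (by positivity) hn,
        mul_le_mul hxΩ hz (by positivity) (by positivity),
        mul_le_mul hyΩ hz (by positivity) (by positivity),
        mul_le_mul_of_nonneg_left hx hLn, mul_le_mul_of_nonneg_left hy hLn,
        mul_le_mul_of_nonneg_left hz hLn, mul_le_mul_of_nonneg_right hL2 (mul_nonneg hn hn)]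

lemma abs_M2_apply_le_one (Ω N : ℝ) (ξ : En 3) (i k : Fin 4) : |M2 Ω N ξ i k| ≤ 1 := by
  have hpos : 0 ≤ ‖ξ‖ * nxp Ω N ξ := mul_nonneg (norm_nonneg ξ) (Real.sqrt_nonneg _)
  simp only [M2, Matrix.smul_apply, smul_eq_mul]
  refine abs_inv_mul_le_of_abs_le_mul hpos zero_le_one
    (abs_le_of_sq_le_sq ?_ (by rwa [one_mul]))
  rw [one_mul, mul_pow, nxp_sq, norm_sq_En3]
  generalize ξ 0 = x; generalize ξ 1 = y; generalize ξ 2 = z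
  set n := N ^ 2 * x ^ 2 + N ^ 2 * y ^ 2 + Ω ^ 2 * z ^ 2
  set w := x ^ 2 + y ^ 2 + z ^ 2
  have hw : 0 ≤ w := by positivity
  have hx : N ^ 2 * x ^ 2 ≤ n := by simp only [n]; nlinarith [sq_nonneg (N * y), sq_nonneg (Ω * z)]
  have hy : N ^ 2 * y ^ 2 ≤ n := by simp only [n]; nlinarith [sq_nonneg (N * x), sq_nonneg (Ω * z)]
  have hz : Ω ^ 2 * z ^ 2 ≤ n := by simp only [n]; nlinarith [sq_nonneg (N * x), sq_nonneg (N * y)]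
  have hxy : N ^ 2 * x ^ 2 + N ^ 2 * y ^ 2 ≤ n := by simp only [n]; nlinarith [sq_nonneg (Ω * z)]
  have wx : x ^ 2 ≤ w := by simp only [w]; nlinarith [sq_nonneg y, sq_nonneg z]
  have wy : y ^ 2 ≤ w := by simp only [w]; nlinarith [sq_nonneg x, sq_nonneg z]
  have wz : z ^ 2 ≤ w := by simp only [w]; nlinarith [sq_nonneg x, sq_nonneg y]
  have wxy : x ^ 2 + y ^ 2 ≤ w := by simp only [w]; nlinarith [sq_nonneg z]
  fin_cases i <;> fin_cases k <;> simp <;>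
    linarith [mul_le_mul wx hz (by positivity) hw,
      mul_le_mul wy hz (by positivity) hw,
      mul_le_mul wz hz (by positivity) hw,
      mul_le_mul wz hx (by positivity) hw,
      mul_le_mul wz hy (by positivity) hw,
      mul_le_mul wxy hxy (by positivity) hw]

lemma abs_symS_apply_le {Ω N L : ℝ} (hL : 1 ≤ L) (hNΩ : N ≤ L * |Ω|) (hΩN : |Ω| ≤ L * N)
    (ν α t : ℝ) (ξ : En 3) (i k : Fin 4) :
    |symS ν α Ω N t ξ i k| ≤ 3 * L * Real.exp (-(ν * t * ‖ξ‖ ^ (2 * α))) := by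
  obtain ⟨h1, h3⟩ := abs_M1_M3_apply_le hL hNΩ hΩN ξ i k
  have h2 := abs_M2_apply_le_one Ω N ξ i k
  set θ := t * nxp Ω N ξ / ‖ξ‖
  have hcomb : |Real.cos θ * M1 Ω N ξ i k + Real.sin θ * M2 Ω N ξ i k + M3 Ω N ξ i k| ≤ 3 * L :=
    calc |Real.cos θ * M1 Ω N ξ i k + Real.sin θ * M2 Ω N ξ i k + M3 Ω N ξ i k|
        ≤ |Real.cos θ| * |M1 Ω N ξ i k| + |Real.sin θ| * |M2 Ω N ξ i k| + |M3 Ω N ξ i k| := by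
          rw [← abs_mul, ← abs_mul]; exact abs_add_three _ _ _
      _ ≤ 1 * L + 1 * 1 + L := by
          gcongr
          exacts [Real.abs_cos_le_one θ, Real.abs_sin_le_one θ]
      _ ≤ 3 * L := by linarith
  simp only [symS, Matrix.smul_apply, Matrix.add_apply, smul_eq_mul]
  rw [abs_mul, Real.abs_exp, mul_comm]
  exact mul_le_mul_of_nonneg_right hcomb (Real.exp_nonneg _)

lemma norm_map_ofReal_mulVec_le {m n : Type*} [Fintype m] [Fintype n] (A : Matrix m n ℝ)
    {K : ℝ} (hK : 0 ≤ K) (hA : ∀ i k, |A i k| ≤ K) (v : n → ℂ) :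
    ‖(A.map ((↑) : ℝ → ℂ)).mulVec v‖ ≤ Fintype.card n * K * ‖v‖ := by
  refine (pi_norm_le_iff_of_nonneg (by positivity)).2 fun i => ?_
  calc ‖∑ k, (A i k : ℂ) * v k‖ ≤ ∑ k, ‖(A i k : ℂ) * v k‖ := norm_sum_le _ _
    _ ≤ ∑ _k : n, K * ‖v‖ := by
        gcongr with k
        rw [norm_mul, Complex.norm_real, Real.norm_eq_abs]
        exact mul_le_mul (hA i k) (norm_le_pi_norm v k) (norm_nonneg _) hK
    _ = Fintype.card n * K * ‖v‖ := by simp [mul_assoc]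

lemma norm_applyS_le {Ω N L : ℝ} (hL : 1 ≤ L) (hNΩ : N ≤ L * |Ω|) (hΩN : |Ω| ≤ L * N)
    (ν α t : ℝ) (v0 : En 3 → Fin 4 → ℂ) (ξ : En 3) :
    ‖applyS ν α Ω N t v0 ξ‖ ≤ 12 * L * Real.exp (-(ν * t * ‖ξ‖ ^ (2 * α))) * ‖v0 ξ‖ := by
  refine (norm_map_ofReal_mulVec_le _ (by positivity) (abs_symS_apply_le hL hNΩ hΩN ν α t ξ)
    (v0 ξ)).trans_eq ?_
  simp only [Fintype.card_fin]
  ring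

lemma le_norm_of_dyadic_ne_zero {n : ℕ} {φ : En n → ℝ}
    (hφ : ∀ ξ, φ ξ ≠ 0 → 3 / 4 ≤ ‖ξ‖) {j : ℤ} {ξ : En n} (h : φ ((2 : ℝ) ^ (-j) • ξ) ≠ 0) :
    3 / 4 * (2 : ℝ) ^ j ≤ ‖ξ‖ := by
  have h2j : (0 : ℝ) < 2 ^ j := _root_.zpow_pos two_pos j
  have := hφ _ h
  rwa [norm_smul, Real.norm_eq_abs, abs_of_pos (_root_.zpow_pos two_pos _), zpow_neg,
    inv_mul_eq_div, le_div_iff₀ h2j] at this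

lemma norm_smul_applyS_le {Ω N L ν α t : ℝ} {φ : En 3 → ℝ} (hφ : ∀ ξ, φ ξ ≠ 0 → 3 / 4 ≤ ‖ξ‖)
    (hL : 1 ≤ L) (hNΩ : N ≤ L * |Ω|) (hΩN : |Ω| ≤ L * N) (hν : 0 ≤ ν) (hα : 0 ≤ α)
    (ht : 0 ≤ t) (v0 : En 3 → Fin 4 → ℂ) (j : ℤ) (ξ : En 3) :
    ‖φ ((2 : ℝ) ^ (-j) • ξ) • applyS ν α Ω N t v0 ξ‖ ≤
      12 * L * Real.exp (-(ν * (3 / 4 * (2 : ℝ) ^ j) ^ (2 * α) * t)) *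
        ‖φ ((2 : ℝ) ^ (-j) • ξ) • v0 ξ‖ := by
  by_cases h : φ ((2 : ℝ) ^ (-j) • ξ) = 0
  · rw [h, zero_smul, zero_smul, norm_zero, mul_zero]
  have hdecay : Real.exp (-(ν * t * ‖ξ‖ ^ (2 * α))) ≤
      Real.exp (-(ν * (3 / 4 * (2 : ℝ) ^ j) ^ (2 * α) * t)) := by
    have := Real.rpow_le_rpow (by positivity) (le_norm_of_dyadic_ne_zero hφ h) (by positivity :
      0 ≤ 2 * α)
    rw [Real.exp_le_exp, neg_le_neg_iff, mul_right_comm]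
    exact mul_le_mul_of_nonneg_left this (mul_nonneg hν ht)
  rw [norm_smul, norm_smul]
  calc ‖φ ((2 : ℝ) ^ (-j) • ξ)‖ * ‖applyS ν α Ω N t v0 ξ‖
      ≤ ‖φ ((2 : ℝ) ^ (-j) • ξ)‖ * (12 * L * Real.exp (-(ν * t * ‖ξ‖ ^ (2 * α))) * ‖v0 ξ‖) := by
        gcongr
        exact norm_applyS_le hL hNΩ hΩN ν α t v0 ξ
    _ ≤ ‖φ ((2 : ℝ) ^ (-j) • ξ)‖ *
          (12 * L * Real.exp (-(ν * (3 / 4 * (2 : ℝ) ^ j) ^ (2 * α) * t)) * ‖v0 ξ‖) := by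
        gcongr
    _ = _ := by ring

lemma morreyNorm_le_of_norm_le {n : ℕ} {F : Type*} [NormedAddCommGroup F] [NormedSpace ℝ F]
    {q μ c : ℝ} {f g : En n → F} (h : ∀ ξ, ‖f ξ‖ ≤ c * ‖g ξ‖) :
    morreyNorm q μ f ≤ ENNReal.ofReal c * morreyNorm q μ g := by
  refine iSup_le fun x₀ => iSup_le fun d => iSup_le fun hd => ?_
  calc ENNReal.ofReal (d ^ (-(μ / q))) *
        eLpNorm f (ENNReal.ofReal q) (volume.restrict (Metric.ball x₀ d))
      ≤ ENNReal.ofReal (d ^ (-(μ / q))) *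
        (ENNReal.ofReal c * eLpNorm g (ENNReal.ofReal q) (volume.restrict (Metric.ball x₀ d))) := by
        gcongr
        exact eLpNorm_le_mul_eLpNorm_of_ae_le_mul (Filter.Eventually.of_forall h) _
    _ = ENNReal.ofReal c * (ENNReal.ofReal (d ^ (-(μ / q))) *
        eLpNorm g (ENNReal.ofReal q) (volume.restrict (Metric.ball x₀ d))) := by ring
    _ ≤ ENNReal.ofReal c * morreyNorm q μ g := by
        gcongr
        exact le_iSup₂_of_le x₀ d (le_iSup_of_le hd le_rfl)

lemma lintegral_Ioi_ofReal_mul_exp_neg_mul {K c : ℝ} (hK : 0 ≤ K) (hc : 0 < c) :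
    ∫⁻ t in Set.Ioi (0 : ℝ), ENNReal.ofReal (K * Real.exp (-(c * t))) =
      ENNReal.ofReal (K / c) := by
  have hint : IntegrableOn (fun t : ℝ => Real.exp (-(c * t))) (Set.Ioi 0) := by
    simpa [neg_mul] using exp_neg_integrableOn_Ioi 0 hc
  rw [← ofReal_integral_eq_lintegral_ofReal (hint.const_mul K)
    (Filter.Eventually.of_forall fun t => by positivity), integral_const_mul]
  have h := integral_comp_mul_left_Ioi (fun u => Real.exp (-u)) 0 hc
  rw [mul_zero, integral_exp_neg_Ioi_zero, smul_eq_mul, mul_one] at h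
  rw [h, div_eq_mul_inv]

lemma lrNorm_le_mul {r : ℝ≥0∞} (hr : r ≠ 0) {c : ℝ≥0∞} {a b : ℤ → ℝ≥0∞}
    (h : ∀ j, a j ≤ c * b j) : lrNorm r a ≤ c * lrNorm r b := by
  unfold lrNorm
  split_ifs with htop
  · exact iSup_le fun j => (h j).trans (mul_le_mul_right (le_iSup b j) c)
  have hp : 0 < r.toReal := ENNReal.toReal_pos hr htop
  calc (∑' j, a j ^ r.toReal) ^ (1 / r.toReal)
      ≤ (∑' j, (c * b j) ^ r.toReal) ^ (1 / r.toReal) := by gcongr; exact h _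
    _ = c * (∑' j, b j ^ r.toReal) ^ (1 / r.toReal) := by
        simp_rw [ENNReal.mul_rpow_of_nonneg _ _ hp.le, ENNReal.tsum_mul_left]
        rw [ENNReal.mul_rpow_of_nonneg _ _ (by positivity), ← ENNReal.rpow_mul,
          mul_one_div_cancel hp.ne', ENNReal.rpow_one]

lemma lintegral_morreyNorm_applyS_le {Ω N L ν α : ℝ} {φ : En 3 → ℝ}
    (hφ : ∀ ξ, φ ξ ≠ 0 → 3 / 4 ≤ ‖ξ‖) (hL : 1 ≤ L) (hNΩ : N ≤ L * |Ω|) (hΩN : |Ω| ≤ L * N)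
    (hν : 0 < ν) (hα : 0 ≤ α) (q μ : ℝ) (v0 : En 3 → Fin 4 → ℂ) (j : ℤ) :
    ∫⁻ t in Set.Ioi (0 : ℝ),
        morreyNorm q μ (fun ξ => φ ((2 : ℝ) ^ (-j) • ξ) • applyS ν α Ω N t v0 ξ) ≤
      ENNReal.ofReal (12 * L / (ν * (3 / 4 * (2 : ℝ) ^ j) ^ (2 * α))) *
        morreyNorm q μ (fun ξ => φ ((2 : ℝ) ^ (-j) • ξ) • v0 ξ) := by
  set rate := ν * (3 / 4 * (2 : ℝ) ^ j) ^ (2 * α)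
  calc ∫⁻ t in Set.Ioi (0 : ℝ),
        morreyNorm q μ (fun ξ => φ ((2 : ℝ) ^ (-j) • ξ) • applyS ν α Ω N t v0 ξ)
      ≤ ∫⁻ t in Set.Ioi (0 : ℝ), ENNReal.ofReal (12 * L * Real.exp (-(rate * t))) *
          morreyNorm q μ (fun ξ => φ ((2 : ℝ) ^ (-j) • ξ) • v0 ξ) :=
        setLIntegral_mono' measurableSet_Ioi fun t ht => morreyNorm_le_of_norm_le
          (norm_smul_applyS_le hφ hL hNΩ hΩN hν.le hα (le_of_lt ht) v0 j)
    _ = ENNReal.ofReal (12 * L / rate) *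
          morreyNorm q μ (fun ξ => φ ((2 : ℝ) ^ (-j) • ξ) • v0 ξ) := by
        rw [lintegral_mul_const _ (by fun_prop),
          lintegral_Ioi_ofReal_mul_exp_neg_mul (by positivity) (by positivity)]

lemma two_rpow_mul_add_div_dyadic_rpow (j : ℤ) (s α : ℝ) :
    (2 : ℝ) ^ ((j : ℝ) * (s + 2 * α)) / (3 / 4 * (2 : ℝ) ^ j) ^ (2 * α) =
      (4 / 3) ^ (2 * α) * (2 : ℝ) ^ ((j : ℝ) * s) := by
  rw [Real.mul_rpow (by norm_num) (by positivity), ← Real.rpow_intCast,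
    ← Real.rpow_mul two_pos.le, mul_add, Real.rpow_add two_pos,
    show (4 / 3 : ℝ) = (3 / 4)⁻¹ by norm_num, Real.inv_rpow (by norm_num)]
  field_simp

theorem semigroup_integrated_estimate_general (μ q s α : ℝ) (r : ℝ≥0∞)
    (hr : 1 ≤ r) (hα : 1 / 2 ≤ α)
    (φ : En 3 → ℝ) (hφ : IsLP φ) :
    ∃ C > (0 : ℝ), ∀ ν > (0 : ℝ), ∀ Ω : ℝ, Ω ≠ 0 → ∀ N > (0 : ℝ),
      ∀ v0 : En 3 → Fin 4 → ℂ, AEStronglyMeasurable v0 volume →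
        fbmNorm s q μ r φ v0 < ⊤ →
        clNorm1 (s + 2 * α) q μ r φ (fun t => applyS ν α Ω N t v0) ≤
          ENNReal.ofReal (C * max 2 (max (|Ω| / N) (N / |Ω|)) / ν) *
            fbmNorm s q μ r φ v0 := by
  refine ⟨12 * (4 / 3) ^ (2 * α), by positivity, fun ν hν Ω hΩ N hN v0 _ _ => ?_⟩
  set L := max 2 (max (|Ω| / N) (N / |Ω|))
  have hL : 1 ≤ L := by linarith [le_max_left 2 (max (|Ω| / N) (N / |Ω|))]
  have hNΩ : N ≤ L * |Ω| :=
    (div_le_iff₀ (abs_pos.2 hΩ)).1 ((le_max_right _ _).trans (le_max_right _ _))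
  have hΩN : |Ω| ≤ L * N := (div_le_iff₀ hN).1 ((le_max_left _ _).trans (le_max_right _ _))
  refine lrNorm_le_mul (one_pos.trans_le hr).ne' fun j => ?_
  calc _ ≤ _ := mul_le_mul_right (lintegral_morreyNorm_applyS_le (fun ξ h => (hφ.2.2.2.1 ξ h).1)
          hL hNΩ hΩN hν (by linarith) q μ v0 j) _
    _ = _ := by
        rw [← mul_assoc, ← ENNReal.ofReal_mul (by positivity), ← mul_assoc,
          ← ENNReal.ofReal_mul (by positivity)]
        congr 2
        linear_combination (12 * L / ν) * two_rpow_mul_add_div_dyadic_rpow j s α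

/-- Integrated smoothing estimate for the fractional Boussinesq–Coriolis–Stratification
semigroup: `‖S^α_{Ω,N}(·)v₀‖_{𝓛^1((0,∞);FN^{s+2α}_{q,μ,r})} ≤ (C L/ν) ‖v₀‖_{FN^s_{q,μ,r}}`,
with `C` independent of `Ω` and `N`. -/
theorem semigroup_integrated_estimate (μ q s α : ℝ) (r : ℝ≥0∞)
    (hμ : 0 ≤ μ) (hμ' : μ < 3) (hq : 1 ≤ q)
    (hr : 1 ≤ r) (hα : 1 / 2 ≤ α) (hα' : α < 5 / 2)
    (φ : En 3 → ℝ) (hφ : IsLP φ) :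
    ∃ C > (0 : ℝ), ∀ ν > (0 : ℝ), ∀ Ω : ℝ, Ω ≠ 0 → ∀ N > (0 : ℝ),
      ∀ v0 : En 3 → Fin 4 → ℂ, AEStronglyMeasurable v0 volume →
        fbmNorm s q μ r φ v0 < ⊤ →
        clNorm1 (s + 2 * α) q μ r φ (fun t => applyS ν α Ω N t v0) ≤
          ENNReal.ofReal (C * max 2 (max (|Ω| / N) (N / |Ω|)) / ν) *
            fbmNorm s q μ r φ v0 :=
  semigroup_integrated_estimate_general μ q s α r hr hα φ hφ

end
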